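/- arXiv:1704.04451 — 5 statements merged into one kernel-verified Lean document; each statement's English description precedes it below -/
import Mathlib

section
/- (Proposition 1) For every i ∈ {1, …, n}, the entity-membership probabilities form a valid probability distribution: Σ_{u=1}^{n} P(i,u) = 1. -/
/-! Splitting off the diagonal term and exchanging the order of summation turns the recurrence
into `∑_{u ≤ i} P(i,u) = ∑_{j < i} q(i,j) ∑_{u ≤ j} P(j,u) + q(i,i)`, so by strong induction on `i`
every row of `P` has the same total as the corresponding row of `q`, namely `1`. -/

open Finset

theorem Finset.sum_Icc_Icc_comm {M : Type*} [AddCommMonoid M] (a b : ℕ) (f : ℕ → ℕ → M) :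
    ∑ u ∈ Icc a b, ∑ j ∈ Icc u b, f u j = ∑ j ∈ Icc a b, ∑ u ∈ Icc a j, f u j :=
  sum_comm' fun u j ↦ by simp only [mem_Icc]; omega

section EntityMembership

variable {R : Type*} [Semiring R] (q P : ℕ → ℕ → R)

theorem sum_Icc_row_eq_sum_mul_sum_add {i : ℕ} (hi : 1 ≤ i) (hdiag : P i i = q i i)
    (hrec : ∀ u, 1 ≤ u → u < i → P i u = ∑ j ∈ Icc u (i - 1), q i j * P j u) :
    ∑ u ∈ Icc 1 i, P i u = ∑ j ∈ Icc 1 (i - 1), q i j * ∑ u ∈ Icc 1 j, P j u + q i i := by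
  obtain ⟨m, rfl⟩ : ∃ m, i = m + 1 := ⟨i - 1, by omega⟩
  have hrec' : ∀ u ∈ Icc 1 m, P (m + 1) u = ∑ j ∈ Icc u m, q (m + 1) j * P j u := fun u hu ↦ by
    rw [mem_Icc] at hu
    exact hrec u hu.1 (by omega)
  simp_rw [sum_Icc_succ_top hi, hdiag, sum_congr rfl hrec', sum_Icc_Icc_comm, mul_sum,
    Nat.add_sub_cancel]

theorem sum_Icc_row_eq_one {n : ℕ}
    (hq_sum : ∀ i, 1 ≤ i → i ≤ n → ∑ j ∈ Icc 1 i, q i j = 1)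
    (hdiag : ∀ i, 1 ≤ i → i ≤ n → P i i = q i i)
    (hrec : ∀ i u, i ≤ n → 1 ≤ u → u < i → P i u = ∑ j ∈ Icc u (i - 1), q i j * P j u)
    {i : ℕ} (hi : 1 ≤ i) (hin : i ≤ n) : ∑ u ∈ Icc 1 i, P i u = 1 := by
  induction i using Nat.strong_induction_on with
  | _ i ih =>
  have hprev : ∀ j ∈ Icc 1 (i - 1), q i j * ∑ u ∈ Icc 1 j, P j u = q i j := fun j hj ↦ by
    rw [mem_Icc] at hj
    rw [ih j (by omega) hj.1 (by omega), mul_one]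
  rw [sum_Icc_row_eq_sum_mul_sum_add q P hi (hdiag i hi hin) (hrec i · hin), sum_congr rfl hprev,
    ← hq_sum i hi hin, ← Nat.sub_add_cancel hi, sum_Icc_succ_top (by omega), Nat.add_sub_cancel]

end EntityMembership

theorem entity_membership_is_distribution_general
    (n : ℕ)
    (q : ℕ → ℕ → ℝ)
    (hq_sum : ∀ i, 1 ≤ i → i ≤ n → ∑ j ∈ Finset.Icc 1 i, q i j = 1)
    (P : ℕ → ℕ → ℝ)
    (hP_gt : ∀ i u, 1 ≤ i → i ≤ n → 1 ≤ u → u ≤ n → i < u → P i u = 0)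
    (hP_diag : ∀ i, 1 ≤ i → i ≤ n → P i i = q i i)
    (hP_lt : ∀ i u, 1 ≤ i → i ≤ n → 1 ≤ u → u ≤ n → u < i →
      P i u = ∑ j ∈ Finset.Icc u (i - 1), q i j * P j u) :
    ∀ i, 1 ≤ i → i ≤ n → ∑ u ∈ Finset.Icc 1 n, P i u = 1 := by
  intro i hi hin
  have hvanish : ∀ u ∈ Icc 1 n, u ∉ Icc 1 i → P i u = 0 := fun u hu hui ↦ by
    simp only [mem_Icc] at hu hui
    exact hP_gt i u hi hin hu.1 hu.2 (by omega)
  rw [← sum_subset (Icc_subset_Icc_right hin) hvanish]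
  exact sum_Icc_row_eq_one q P hq_sum hP_diag
    (fun i u hin hu hui ↦ hP_lt i u (by omega) hin hu (by omega) hui) hi hin

/-- Proposition 1: the entity-membership probabilities `P i ·` form a valid
probability distribution: for every `i ∈ {1, …, n}`, `∑_{u=1}^{n} P i u = 1`. -/
theorem entity_membership_is_distribution
    (n : ℕ) (hn : 1 ≤ n)
    (q : ℕ → ℕ → ℝ)
    (hq_nonneg : ∀ i, 1 ≤ i → i ≤ n → ∀ j, 1 ≤ j → j ≤ i → 0 ≤ q i j)
    (hq_sum : ∀ i, 1 ≤ i → i ≤ n → ∑ j ∈ Finset.Icc 1 i, q i j = 1)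
    (P : ℕ → ℕ → ℝ)
    (hP_gt : ∀ i u, 1 ≤ i → i ≤ n → 1 ≤ u → u ≤ n → i < u → P i u = 0)
    (hP_diag : ∀ i, 1 ≤ i → i ≤ n → P i i = q i i)
    (hP_lt : ∀ i u, 1 ≤ i → i ≤ n → 1 ≤ u → u ≤ n → u < i →
      P i u = ∑ j ∈ Finset.Icc u (i - 1), q i j * P j u) :
    ∀ i, 1 ≤ i → i ≤ n → ∑ u ∈ Finset.Icc 1 n, P i u = 1 :=
  entity_membership_is_distribution_general n q hq_sum P hP_gt hP_diag hP_lt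
end

section
/- (Proposition 2) For all u, i ∈ {1, …, n} with i > u, the probability that mention i belongs to potential entity E_u is at most the probability that mention u starts entity E_u: P(i,u) ≤ P(u,u). -/
/-- Proposition 2: for all `u, i ∈ {1, …, n}` with `i > u`, `P i u ≤ P u u`. -/
theorem entity_membership_le_first_mention
    (n : ℕ) (hn : 1 ≤ n)
    (q : ℕ → ℕ → ℝ)
    (hq_nonneg : ∀ i, 1 ≤ i → i ≤ n → ∀ j, 1 ≤ j → j ≤ i → 0 ≤ q i j)
    (hq_sum : ∀ i, 1 ≤ i → i ≤ n → ∑ j ∈ Finset.Icc 1 i, q i j = 1)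
    (P : ℕ → ℕ → ℝ)
    (hP_gt : ∀ i u, 1 ≤ i → i ≤ n → 1 ≤ u → u ≤ n → i < u → P i u = 0)
    (hP_diag : ∀ i, 1 ≤ i → i ≤ n → P i i = q i i)
    (hP_lt : ∀ i u, 1 ≤ i → i ≤ n → 1 ≤ u → u ≤ n → u < i →
      P i u = ∑ j ∈ Finset.Icc u (i - 1), q i j * P j u) :
    ∀ u i, 1 ≤ u → u ≤ n → 1 ≤ i → i ≤ n → u < i → P i u ≤ P u u := by
  intro u i hu1 hun
  have hPuu0 : 0 ≤ P u u := by
    rw [hP_diag u hu1 hun]; exact hq_nonneg u hu1 hun u hu1 le_rfl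
  induction i using Nat.strong_induction_on with
  | _ i ih =>
    intro hi1 hin hui
    rw [hP_lt i u hi1 hin hu1 hun hui]
    have hterm : ∀ j ∈ Finset.Icc u (i - 1), q i j * P j u ≤ q i j * P u u := by
      intro j hj
      obtain ⟨hj1, hj2⟩ := Finset.mem_Icc.mp hj
      have hji : j ≤ i := le_trans hj2 (Nat.sub_le i 1)
      have hjn : j ≤ n := le_trans hji hin
      have hj1' : 1 ≤ j := le_trans hu1 hj1
      have hq0 := hq_nonneg i hi1 hin j hj1' hji
      rcases eq_or_lt_of_le hj1 with he | hl
      · rw [← he]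
      · have hjlt : j < i := by omega
        exact mul_le_mul_of_nonneg_left (ih j hjlt hj1' hjn hl) hq0
    calc ∑ j ∈ Finset.Icc u (i - 1), q i j * P j u
        ≤ ∑ j ∈ Finset.Icc u (i - 1), q i j * P u u :=
          Finset.sum_le_sum hterm
      _ = (∑ j ∈ Finset.Icc u (i - 1), q i j) * P u u := by
          rw [Finset.sum_mul]
      _ ≤ 1 * P u u := by
          apply mul_le_mul_of_nonneg_right _ hPuu0
          rw [← hq_sum i hi1 hin]
          apply Finset.sum_le_sum_of_subset_of_nonneg
          · intro j hj
            simp only [Finset.mem_Icc] at *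
            omega
          · intro j hj _
            simp only [Finset.mem_Icc] at hj
            exact hq_nonneg i hi1 hin j hj.1 hj.2
      _ = P u u := one_mul _
end

section
/- For every i ∈ {1, …, n}, the total probability that mention i belongs to an entity started by an earlier mention equals the total probability that mention i is anaphoric: Σ_{u=1}^{i-1} P(i,u) = Σ_{j=1}^{i-1} q(i,j). -/
/-- For every `i ∈ {1, …, n}`, the total probability that mention `i` belongs to an
entity started by an earlier mention equals the total probability that `i` is anaphoric:
`∑_{u=1}^{i-1} P i u = ∑_{j=1}^{i-1} q i j`. -/
theorem entity_membership_anaphoric_total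
    (n : ℕ) (hn : 1 ≤ n)
    (q : ℕ → ℕ → ℝ)
    (hq_nonneg : ∀ i, 1 ≤ i → i ≤ n → ∀ j, 1 ≤ j → j ≤ i → 0 ≤ q i j)
    (hq_sum : ∀ i, 1 ≤ i → i ≤ n → ∑ j ∈ Finset.Icc 1 i, q i j = 1)
    (P : ℕ → ℕ → ℝ)
    (hP_gt : ∀ i u, 1 ≤ i → i ≤ n → 1 ≤ u → u ≤ n → i < u → P i u = 0)
    (hP_diag : ∀ i, 1 ≤ i → i ≤ n → P i i = q i i)
    (hP_lt : ∀ i u, 1 ≤ i → i ≤ n → 1 ≤ u → u ≤ n → u < i →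
      P i u = ∑ j ∈ Finset.Icc u (i - 1), q i j * P j u) :
    ∀ i, 1 ≤ i → i ≤ n →
      ∑ u ∈ Finset.Icc 1 (i - 1), P i u = ∑ j ∈ Finset.Icc 1 (i - 1), q i j := by
  intro i
  induction i using Nat.strong_induction_on with
  | _ i ih =>
    intro hi1 hin
    -- auxiliary: for j < i with 1 ≤ j ≤ n, total ∑_{u=1}^{j} P j u = 1
    have total : ∀ j, j < i → 1 ≤ j → j ≤ n → ∑ u ∈ Finset.Icc 1 j, P j u = 1 := by
      intro j hji hj1 hjn
      have hj : j = (j - 1) + 1 := (Nat.succ_pred_eq_of_pos hj1).symm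
      rw [hj, Finset.sum_Icc_succ_top (by omega)]
      rw [← hj]
      rw [ih j hji hj1 hjn, hP_diag j hj1 hjn]
      rw [show q j j = q j ((j-1)+1) by rw [← hj]]
      rw [← Finset.sum_Icc_succ_top (by omega : 1 ≤ (j-1)+1), ← hj]
      exact hq_sum j hj1 hjn
    rcases Nat.eq_or_lt_of_le hi1 with h1 | h2
    · simp [← h1]
    · -- i ≥ 2
      have step : ∀ u ∈ Finset.Icc 1 (i - 1),
          P i u = ∑ j ∈ Finset.Icc u (i - 1), q i j * P j u := by
        intro u hu
        rw [Finset.mem_Icc] at hu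
        exact hP_lt i u hi1 hin hu.1 (by omega) (by omega)
      rw [Finset.sum_congr rfl step]
      rw [Finset.sum_comm' (t' := Finset.Icc 1 (i-1)) (s' := fun j => Finset.Icc 1 j)
        (by intro u j; simp only [Finset.mem_Icc]; omega)]
      refine Finset.sum_congr rfl ?_
      intro j hj
      rw [Finset.mem_Icc] at hj
      rw [← Finset.mul_sum, total j (by omega) hj.1 (by omega), mul_one]
end

section
/- Let M be a nonempty finite set of mentions, let G_1, …, G_N be a partition of M into nonempty gold clusters, let k ≥ 1, and for each m ∈ M let π_m : Fin k → ℝ have a strict unique maximizer a(m) ∈ Fin k; let S_u = {m ∈ M : a(m) = u}. Then the relaxed B³ recall converges to the hard B³ recall as the temperature tends to zero from above: lim_{T → 0⁺} [Σ_{v=1}^{N} Σ_{u=0}^{k−1} (Σ_{m ∈ G_v} softmax_u(π_m; T))² / |G_v|] / [Σ_{v=1}^{N} |G_v|] = [Σ_{v=1}^{N} Σ_{u=0}^{k−1} |G_v ∩ S_u|² / |G_v|] / [Σ_{v=1}^{N} |G_v|]. -/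
open Filter

/-- The tempered softmax: `softmax π T j = exp(π j / T) / ∑ m, exp(π m / T)`. -/
noncomputable def softmax {k : ℕ} (π : Fin k → ℝ) (T : ℝ) (j : Fin k) : ℝ :=
  Real.exp (π j / T) / ∑ m : Fin k, Real.exp (π m / T)

lemma exp_div_tendsto_zero {c : ℝ} (hc : c < 0) :
    Tendsto (fun T : ℝ => Real.exp (c / T)) (nhdsWithin 0 (Set.Ioi 0)) (nhds 0) := by
  have h1 : Tendsto (fun T : ℝ => c / T) (nhdsWithin 0 (Set.Ioi 0)) atBot := by
    have h2 : Tendsto (fun T : ℝ => T⁻¹) (nhdsWithin 0 (Set.Ioi 0)) atTop :=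
      tendsto_inv_nhdsGT_zero
    simpa [div_eq_mul_inv] using h2.const_mul_atTop_of_neg hc
  exact Real.tendsto_exp_atBot.comp h1

lemma softmax_tendsto {k : ℕ} (π : Fin k → ℝ) (a : Fin k)
    (hmax : ∀ j : Fin k, j ≠ a → π a > π j) (u : Fin k) :
    Tendsto (fun T : ℝ => softmax π T u) (nhdsWithin 0 (Set.Ioi 0))
      (nhds (if u = a then 1 else 0)) := by
  have key : ∀ j : Fin k, Tendsto (fun T : ℝ => Real.exp ((π j - π a) / T))
      (nhdsWithin 0 (Set.Ioi 0)) (nhds (if j = a then 1 else 0)) := by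
    intro j
    by_cases h : j = a
    · simp [h]
    · simpa [h] using exp_div_tendsto_zero (sub_neg.mpr (hmax j h))
  have heq : ∀ T : ℝ, T ≠ 0 → softmax π T u =
      Real.exp ((π u - π a) / T) / ∑ m : Fin k, Real.exp ((π m - π a) / T) := by
    intro T hT
    have hrw : ∀ j : Fin k, Real.exp ((π j - π a) / T) =
        Real.exp (π j / T) * Real.exp (-(π a / T)) := by
      intro j
      rw [← Real.exp_add, sub_div]
      ring_nf
    simp only [hrw, ← Finset.sum_mul, softmax]
    rw [mul_div_mul_right]
    exact Real.exp_ne_zero _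
  have hden : Tendsto (fun T : ℝ => ∑ m : Fin k, Real.exp ((π m - π a) / T))
      (nhdsWithin 0 (Set.Ioi 0)) (nhds 1) := by
    have := tendsto_finset_sum Finset.univ (fun m _ => key m)
    have hsum : (∑ m : Fin k, if m = a then (1:ℝ) else 0) = 1 := by
      simp
    rwa [hsum] at this
  have hlim := (key u).div hden one_ne_zero
  rw [div_one] at hlim
  refine hlim.congr' ?_
  filter_upwards [self_mem_nhdsWithin] with T hT
  exact (heq T (ne_of_gt hT)).symm

/-- The relaxed B³ recall converges, as the temperature `T → 0⁺`, to the hard B³ recall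
computed from the predicted clusters `S u = {m : a m = u}`. -/
theorem relaxed_B3_recall_tendsto_hard
    (M : Type*) [Fintype M] [DecidableEq M] [Nonempty M]
    (N : ℕ) (hN : 1 ≤ N) (G : Fin N → Finset M)
    (hG_nonempty : ∀ v : Fin N, (G v).Nonempty)
    (hG_disjoint : ∀ v w : Fin N, v ≠ w → Disjoint (G v) (G w))
    (hG_cover : Finset.univ.biUnion G = (Finset.univ : Finset M))
    (k : ℕ) (hk : 1 ≤ k)
    (π : M → Fin k → ℝ) (a : M → Fin k)
    (hmax : ∀ m : M, ∀ j : Fin k, j ≠ a m → π m (a m) > π m j) :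
    Tendsto
      (fun T : ℝ =>
        (∑ v : Fin N, ∑ u : Fin k,
            (∑ m ∈ G v, softmax (π m) T u) ^ 2 / ((G v).card : ℝ)) /
          ∑ v : Fin N, ((G v).card : ℝ))
      (nhdsWithin 0 (Set.Ioi 0))
      (nhds
        ((∑ v : Fin N, ∑ u : Fin k,
            (((G v ∩ Finset.univ.filter (fun m : M => a m = u)).card : ℝ)) ^ 2 /
              ((G v).card : ℝ)) /
          ∑ v : Fin N, ((G v).card : ℝ))) := by
  apply Tendsto.div_const
  apply tendsto_finset_sum
  intro v _
  apply tendsto_finset_sum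
  intro u _
  apply Tendsto.div_const
  apply Tendsto.pow
  have hcard : ((G v ∩ Finset.univ.filter (fun m : M => a m = u)).card : ℝ) =
      ∑ m ∈ G v, (if u = a m then (1:ℝ) else 0) := by
    rw [Finset.sum_boole]
    congr 2
    ext m
    simp [eq_comm]
  rw [hcard]
  exact tendsto_finset_sum _ (fun m _ => softmax_tendsto (π m) (a m) (hmax m) u)
end

section
/- Let M be a nonempty finite set of mentions, let G_1, …, G_N be a partition of M into nonempty gold clusters, let k ≥ 1, and for each m ∈ M let π_m : Fin k → ℝ have a strict unique maximizer a(m) ∈ Fin k; let S_u = {m ∈ M : a(m) = u}. Then the relaxed B³ precision converges to the hard B³ precision as the temperature tends to zero from above: lim_{T → 0⁺} [Σ_{u=0}^{k−1} Σ_{v=1}^{N} (Σ_{m ∈ G_v} softmax_u(π_m; T))² / (Σ_{m ∈ M} softmax_u(π_m; T))] / [Σ_{u=0}^{k−1} Σ_{m ∈ M} softmax_u(π_m; T)] = [Σ_{u=0}^{k−1} Σ_{v=1}^{N} |G_v ∩ S_u|² / |S_u|] / [Σ_{u=0}^{k−1} |S_u|], where on the right-hand side any term with |S_u| = 0 is taken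 to be 0. -/
open Filter

/-!
As `T → 0⁺`, the softmax of scores with a strict maximizer `i` tends to the indicator of `i`:
after dividing numerator and denominator by `exp (π i / T)`, every term but the `i`-th is
`exp (c / T)` with `c < 0`. Hence each soft cluster size tends to the hard one. The only term
that is not continuous in these sizes is `x ^ 2 / y` at `y = 0`, which is harmless because
`0 ≤ x ≤ y` squeezes it between `0` and `y`. The total mass `∑ u, ∑ m, softmax (π m) T u`
is identically `|M|`, so the outer quotient needs no such care.
-/

section

open Finset Topology

lemma sq_div_le_of_nonneg_of_le {x y : ℝ} (hx : 0 ≤ x) (hxy : x ≤ y) : x ^ 2 / y ≤ y :=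
  calc x ^ 2 / y ≤ y ^ 2 / y := by gcongr; exact hx.trans hxy
    _ = y := by rw [sq, mul_self_div_self]

lemma Filter.Tendsto.sq_div_of_nonneg_of_le {α : Type*} {l : Filter α} [l.NeBot]
    {f g : α → ℝ} {x y : ℝ} (hf : Tendsto f l (𝓝 x)) (hg : Tendsto g l (𝓝 y))
    (hf₀ : ∀ t, 0 ≤ f t) (hfg : ∀ t, f t ≤ g t) :
    Tendsto (fun t => f t ^ 2 / g t) l (𝓝 (x ^ 2 / y)) := by
  rcases eq_or_ne y 0 with rfl | hy
  · rw [div_zero]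
    exact tendsto_of_tendsto_of_tendsto_of_le_of_le tendsto_const_nhds hg
      (fun t => div_nonneg (sq_nonneg _) ((hf₀ t).trans (hfg t)))
      (fun t => sq_div_le_of_nonneg_of_le (hf₀ t) (hfg t))
  · exact (hf.pow 2).div hg hy

lemma tendsto_exp_div_nhdsGT_zero_of_neg {c : ℝ} (hc : c < 0) :
    Tendsto (fun T : ℝ => Real.exp (c / T)) (𝓝[>] 0) (𝓝 0) :=
  Real.tendsto_exp_atBot.comp <|
    (tendsto_inv_nhdsGT_zero.const_mul_atTop_of_neg hc).congr fun T => (div_eq_mul_inv c T).symm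

variable {k : ℕ}

lemma softmax_nonneg (π : Fin k → ℝ) (T : ℝ) (j : Fin k) : 0 ≤ softmax π T j :=
  div_nonneg (Real.exp_pos _).le (sum_nonneg fun _ _ => (Real.exp_pos _).le)

lemma sum_softmax [Nonempty (Fin k)] (π : Fin k → ℝ) (T : ℝ) : ∑ j, softmax π T j = 1 := by
  simp only [softmax, ← sum_div]
  exact div_self (sum_pos (fun _ _ => Real.exp_pos _) univ_nonempty).ne'

lemma softmax_eq_exp_sub_div (π : Fin k → ℝ) (T : ℝ) (i j : Fin k) :
    softmax π T j = Real.exp ((π j - π i) / T) / ∑ m, Real.exp ((π m - π i) / T) := by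
  simp only [sub_div, Real.exp_sub, ← sum_div, softmax]
  rw [div_div_div_cancel_right₀ (Real.exp_ne_zero _)]

lemma tendsto_softmax_nhdsGT_zero (π : Fin k → ℝ) {i : Fin k} (hi : ∀ j, j ≠ i → π j < π i)
    (j : Fin k) :
    Tendsto (fun T => softmax π T j) (𝓝[>] 0) (𝓝 (if j = i then 1 else 0)) := by
  have hexp : ∀ m, Tendsto (fun T => Real.exp ((π m - π i) / T)) (𝓝[>] 0)
      (𝓝 (if m = i then 1 else 0)) := by
    intro m
    split_ifs with hm
    · simp [hm]
    · exact tendsto_exp_div_nhdsGT_zero_of_neg (sub_neg.mpr (hi m hm))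
  have hsum : Tendsto (fun T => ∑ m, Real.exp ((π m - π i) / T)) (𝓝[>] 0) (𝓝 1) := by
    simpa using tendsto_finsetSum univ fun m _ => hexp m
  have h := (hexp j).div hsum one_ne_zero
  rw [div_one] at h
  exact h.congr fun T => (softmax_eq_exp_sub_div π T i j).symm

lemma tendsto_sum_softmax_nhdsGT_zero {M : Type*} (π : M → Fin k → ℝ) (a : M → Fin k)
    (hmax : ∀ m j, j ≠ a m → π m (a m) > π m j) (s : Finset M) (u : Fin k) :
    Tendsto (fun T => ∑ m ∈ s, softmax (π m) T u) (𝓝[>] 0) (𝓝 (#{m ∈ s | a m = u} : ℝ)) := by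
  have h := tendsto_finsetSum s fun m _ => tendsto_softmax_nhdsGT_zero (π m) (hmax m) u
  simpa only [sum_boole, eq_comm] using h

end

theorem relaxed_B3_precision_tendsto_hard_general
    (M : Type*) [Fintype M] [DecidableEq M]
    (N : ℕ) (G : Fin N → Finset M)
    (k : ℕ)
    (π : M → Fin k → ℝ) (a : M → Fin k)
    (hmax : ∀ m : M, ∀ j : Fin k, j ≠ a m → π m (a m) > π m j) :
    Tendsto
      (fun T : ℝ =>
        (∑ u : Fin k, ∑ v : Fin N,
            (∑ m ∈ G v, softmax (π m) T u) ^ 2 / ∑ m : M, softmax (π m) T u) /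
          ∑ u : Fin k, ∑ m : M, softmax (π m) T u)
      (nhdsWithin 0 (Set.Ioi 0))
      (nhds
        ((∑ u : Fin k, ∑ v : Fin N,
            (((G v ∩ Finset.univ.filter (fun m : M => a m = u)).card : ℝ)) ^ 2 /
              ((Finset.univ.filter (fun m : M => a m = u)).card : ℝ)) /
          ∑ u : Fin k, ((Finset.univ.filter (fun m : M => a m = u)).card : ℝ))) := by
  have hmass : ∀ T, ∑ u, ∑ m, softmax (π m) T u = Fintype.card M := fun T => by
    rw [Finset.sum_comm]
    simp [fun m => @sum_softmax k ⟨a m⟩ (π m) T]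
  have hcard : ∑ u, ((Finset.univ.filter (fun m => a m = u)).card : ℝ) = Fintype.card M := by
    rw [← Nat.cast_sum, ← Finset.card_eq_sum_card_fiberwise fun m _ => Finset.mem_univ (a m)]
    rfl
  simp only [hmass, hcard, Finset.inter_filter, Finset.inter_univ]
  refine Tendsto.div_const (tendsto_finsetSum _ fun u _ => tendsto_finsetSum _ fun v _ => ?_) _
  exact (tendsto_sum_softmax_nhdsGT_zero π a hmax (G v) u).sq_div_of_nonneg_of_le
    (tendsto_sum_softmax_nhdsGT_zero π a hmax Finset.univ u)
    (fun T => Finset.sum_nonneg fun m _ => softmax_nonneg _ _ _)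
    (fun T => Finset.sum_le_sum_of_subset_of_nonneg (Finset.subset_univ _)
      fun m _ _ => softmax_nonneg _ _ _)

/-- The relaxed B³ precision converges, as the temperature `T → 0⁺`, to the hard B³
precision computed from the predicted clusters `S u = {m : a m = u}` (where a summand
with `|S u| = 0` contributes `0`, as division by zero yields `0` in `ℝ`). -/
theorem relaxed_B3_precision_tendsto_hard
    (M : Type*) [Fintype M] [DecidableEq M] [Nonempty M]
    (N : ℕ) (hN : 1 ≤ N) (G : Fin N → Finset M)
    (hG_nonempty : ∀ v : Fin N, (G v).Nonempty)
    (hG_disjoint : ∀ v w : Fin N, v ≠ w → Disjoint (G v) (G w))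
    (hG_cover : Finset.univ.biUnion G = (Finset.univ : Finset M))
    (k : ℕ) (hk : 1 ≤ k)
    (π : M → Fin k → ℝ) (a : M → Fin k)
    (hmax : ∀ m : M, ∀ j : Fin k, j ≠ a m → π m (a m) > π m j) :
    Tendsto
      (fun T : ℝ =>
        (∑ u : Fin k, ∑ v : Fin N,
            (∑ m ∈ G v, softmax (π m) T u) ^ 2 / ∑ m : M, softmax (π m) T u) /
          ∑ u : Fin k, ∑ m : M, softmax (π m) T u)
      (nhdsWithin 0 (Set.Ioi 0))
      (nhds
        ((∑ u : Fin k, ∑ v : Fin N,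
            (((G v ∩ Finset.univ.filter (fun m : M => a m = u)).card : ℝ)) ^ 2 /
              ((Finset.univ.filter (fun m : M => a m = u)).card : ℝ)) /
          ∑ u : Fin k, ((Finset.univ.filter (fun m : M => a m = u)).card : ℝ))) :=
  relaxed_B3_precision_tendsto_hard_general M N G k π a hmax
end
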